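/- arXiv:1101.4207 — 3 statements merged into one kernel-verified Lean document; each statement's English description precedes it below -/
import Mathlib

section
/- The function x ↦ L_{1/2}(−x) = e^{−x/2}[(1+x)I_0(x/2) + x I_1(x/2)] is strictly concave on [0, ∞), where I_0 and I_1 are modified Bessel functions of the first kind. -/
/-- Modified Bessel function of the first kind of order 0, via its power series. -/
noncomputable def besselI0 (x : ℝ) : ℝ :=
  ∑' m : ℕ, (x / 2) ^ (2 * m) / ((Nat.factorial m : ℝ) ^ 2)

/-- Modified Bessel function of the first kind of order 1, via its power series. -/
noncomputable def besselI1 (x : ℝ) : ℝ :=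
  ∑' m : ℕ, (x / 2) ^ (2 * m + 1) / ((Nat.factorial m : ℝ) * (Nat.factorial (m + 1) : ℝ))

/-- x ↦ L_{1/2}(−x) = e^{−x/2}[(1+x)I_0(x/2) + x I_1(x/2)]. -/
noncomputable def LhalfNeg (x : ℝ) : ℝ :=
  Real.exp (-x / 2) * ((1 + x) * besselI0 (x / 2) + x * besselI1 (x / 2))

/-!
Writing `I_k(x) = (x/2)^k g_k((x/2)^2)` with the entire series `g_k(t) = ∑ tⁿ / (n! (n+k)!)`,
one has `g_k' = g_{k+1}` and `g_0 = g_1 + t g_2`, hence `I₀' = I₁` and `I₁' = I₀ - I₁/x`.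
Differentiating `L(x) = e^{-x/2}((1+x) I₀(x/2) + x I₁(x/2))` twice with these rules, all Bessel
terms but one cancel: `L''(x) = -e^{-x/2} g_1(x²/16) / 8 = -e^{-x/2} I₁(x/2) / (2x)`, which is
negative on all of `ℝ` because `g_1 > 0` on `[0, ∞)`.
-/

open Nat

theorem hasDerivAt_tsum_mul_pow {a : ℕ → ℝ} (ha : ∀ r : ℝ, Summable fun n => |a n| * r ^ n)
    (x : ℝ) :
    HasDerivAt (fun y => ∑' n, a n * y ^ n) (∑' n, (n + 1) * a (n + 1) * x ^ n) x := by
  set R := |x| + 1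
  have hR : 1 ≤ R := by simp [R]
  have hx : x ∈ Metric.ball (0 : ℝ) R := by simp [R]
  have hsum : Summable fun n => a n * x ^ n := (ha |x|).of_norm_bounded fun n => by simp
  have hbound : ∀ n, ∀ y ∈ Metric.ball (0 : ℝ) R,
      ‖a n * (n * y ^ (n - 1))‖ ≤ |a n| * (2 * R) ^ n := by
    intro n y hy
    rw [mem_ball_zero_iff, Real.norm_eq_abs] at hy
    have hn : (n : ℝ) ≤ 2 ^ n := by exact_mod_cast n.lt_two_pow_self.le
    calc ‖a n * (n * y ^ (n - 1))‖ = |a n| * (n * |y| ^ (n - 1)) := by simp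
      _ ≤ |a n| * (2 ^ n * R ^ n) := by
        gcongr
        exact (pow_le_pow_left₀ (abs_nonneg y) hy.le _).trans (pow_le_pow_right₀ hR (n.sub_le 1))
      _ = |a n| * (2 * R) ^ n := by rw [mul_pow]
  have hderiv := hasDerivAt_tsum_of_isPreconnected (ha (2 * R)) Metric.isOpen_ball
    (convex_ball 0 R).isPreconnected (fun n y _ => (hasDerivAt_pow n y).const_mul (a n))
    hbound hx hsum hx
  refine hderiv.congr_deriv ?_
  rw [((ha (2 * R)).of_norm_bounded fun n => hbound n x hx).tsum_eq_zero_add]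
  simp only [CharP.cast_eq_zero, zero_mul, mul_zero, zero_add, add_tsub_cancel_right]
  push_cast
  exact tsum_congr fun n => by ring

/-- `g_k` of the header: `I_k(x) = (x/2)^k * besselSeries k ((x/2)^2)`. -/
noncomputable def besselSeries (k : ℕ) (t : ℝ) : ℝ :=
  ∑' n : ℕ, t ^ n / (n ! * (n + k)! : ℝ)

lemma summable_besselSeries (k : ℕ) (t : ℝ) :
    Summable fun n : ℕ => t ^ n / (n ! * (n + k)! : ℝ) := by
  refine (Real.summable_pow_div_factorial |t|).of_norm_bounded fun n => ?_
  rw [norm_div, norm_pow, Real.norm_eq_abs, Real.norm_of_nonneg (by positivity)]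
  gcongr
  exact le_mul_of_one_le_right (by positivity) (mod_cast (n + k).factorial_pos)

lemma besselSeries_pos (k : ℕ) {t : ℝ} (ht : 0 ≤ t) : 0 < besselSeries k t :=
  (summable_besselSeries k t).tsum_pos (fun n => by positivity) 0 (by positivity)

lemma hasDerivAt_besselSeries (k : ℕ) (t : ℝ) :
    HasDerivAt (besselSeries k) (besselSeries (k + 1) t) t := by
  have hcoeff : ∀ r : ℝ, Summable fun n : ℕ => |1 / (n ! * (n + k)! : ℝ)| * r ^ n := fun r =>
    (summable_besselSeries k r).congr fun n => by
      rw [abs_of_pos (by positivity), one_div_mul_eq_div]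
  have h := hasDerivAt_tsum_mul_pow hcoeff t
  simp only [one_div_mul_eq_div] at h
  refine h.congr_deriv (tsum_congr fun n => ?_)
  rw [show n + 1 + k = n + (k + 1) by ring, factorial_succ]
  push_cast
  field_simp

/-- Series form of the recurrence `I_k - I_{k+2} = (2(k+1)/x) I_{k+1}`. -/
lemma besselSeries_eq_add (k : ℕ) (t : ℝ) :
    besselSeries k t = (k + 1) * besselSeries (k + 1) t + t * besselSeries (k + 2) t := by
  unfold besselSeries
  rw [(summable_besselSeries k t).tsum_eq_zero_add,
    (summable_besselSeries (k + 1) t).tsum_eq_zero_add, ← tsum_mul_left, mul_add,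
    ← tsum_mul_left, add_assoc, ← Summable.tsum_add]
  · congr 1
    · rw [zero_add, zero_add, factorial_succ]; push_cast; field_simp
    · refine tsum_congr fun n => ?_
      rw [show n + 1 + (k + 1) = (n + k + 1) + 1 by ring, show n + (k + 2) = (n + k + 1) + 1 by ring,
        show n + 1 + k = n + k + 1 by ring, factorial_succ (n + k + 1), factorial_succ n]
      push_cast
      field_simp
      ring
  · exact ((summable_nat_add_iff 1).mpr (summable_besselSeries (k + 1) t)).mul_left _
  · exact (summable_besselSeries (k + 2) t).mul_left t

lemma besselI0_eq_besselSeries (x : ℝ) : besselI0 x = besselSeries 0 ((x / 2) ^ 2) :=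
  tsum_congr fun n => by rw [← pow_mul, add_zero, sq]

lemma besselI1_eq_besselSeries (x : ℝ) : besselI1 x = x / 2 * besselSeries 1 ((x / 2) ^ 2) := by
  rw [besselSeries, ← tsum_mul_left]
  exact tsum_congr fun n => by rw [← pow_mul, pow_succ]; ring

lemma hasDerivAt_half_sq (x : ℝ) : HasDerivAt (fun y : ℝ => (y / 2) ^ 2) (x / 2) x := by
  have h := (hasDerivAt_pow 2 (x / 2)).comp x ((hasDerivAt_id x).div_const 2)
  exact h.congr_deriv (by norm_num; ring)

lemma hasDerivAt_besselI0 (x : ℝ) : HasDerivAt besselI0 (besselI1 x) x := by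
  rw [funext besselI0_eq_besselSeries, besselI1_eq_besselSeries, mul_comm]
  exact (hasDerivAt_besselSeries 0 _).comp x (hasDerivAt_half_sq x)

/-- `besselSeries 1 ((x/2)^2) / 2` is `I₁(x)/x` without the division, so also valid at `x = 0`. -/
lemma hasDerivAt_besselI1 (x : ℝ) :
    HasDerivAt besselI1 (besselI0 x - besselSeries 1 ((x / 2) ^ 2) / 2) x := by
  rw [funext besselI1_eq_besselSeries, besselI0_eq_besselSeries,
    besselSeries_eq_add 0 ((x / 2) ^ 2)]
  refine (((hasDerivAt_id x).div_const 2).mul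
    ((hasDerivAt_besselSeries 1 _).comp x (hasDerivAt_half_sq x))).congr_deriv ?_
  simp only [id_eq, Function.comp_apply]
  ring

lemma hasDerivAt_LhalfNeg (x : ℝ) :
    HasDerivAt LhalfNeg (Real.exp (-x / 2) * (besselI0 (x / 2) + besselI1 (x / 2)) / 2) x := by
  have hhalf := (hasDerivAt_id' x).div_const 2
  have hexp := ((hasDerivAt_id' x).neg.div_const 2).exp
  have hI0 := (hasDerivAt_besselI0 (x / 2)).comp x hhalf
  have hI1 := (hasDerivAt_besselI1 (x / 2)).comp x hhalf
  have h := hexp.mul ((((hasDerivAt_id' x).const_add 1).mul hI0).add ((hasDerivAt_id' x).mul hI1))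
  refine h.congr_deriv ?_
  simp only [Pi.mul_apply, Pi.add_apply, Pi.neg_apply, Function.comp_apply]
  linear_combination Real.exp (-x / 2) * besselI1_eq_besselSeries (x / 2)

lemma hasDerivAt_deriv_LhalfNeg (x : ℝ) :
    HasDerivAt (fun x => Real.exp (-x / 2) * (besselI0 (x / 2) + besselI1 (x / 2)) / 2)
      (-(Real.exp (-x / 2) * besselSeries 1 ((x / 4) ^ 2) / 8)) x := by
  have hhalf := (hasDerivAt_id' x).div_const 2
  have hexp := ((hasDerivAt_id' x).neg.div_const 2).exp
  have hI0 := (hasDerivAt_besselI0 (x / 2)).comp x hhalf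
  have hI1 := (hasDerivAt_besselI1 (x / 2)).comp x hhalf
  refine ((hexp.mul (hI0.add hI1)).div_const 2).congr_deriv ?_
  simp only [Pi.add_apply, Pi.neg_apply, Function.comp_apply]
  rw [show x / 2 / 2 = x / 4 by ring]
  ring

lemma deriv2_LhalfNeg (x : ℝ) :
    deriv^[2] LhalfNeg x = -(Real.exp (-x / 2) * besselSeries 1 ((x / 4) ^ 2) / 8) := by
  rw [Function.iterate_succ_apply, Function.iterate_one,
    funext fun y => (hasDerivAt_LhalfNeg y).deriv, (hasDerivAt_deriv_LhalfNeg x).deriv]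

theorem LhalfNeg_strictConcaveOn : StrictConcaveOn ℝ (Set.Ici (0 : ℝ)) LhalfNeg := by
  have hcont : Continuous LhalfNeg :=
    continuous_iff_continuousAt.2 fun x => (hasDerivAt_LhalfNeg x).continuousAt
  have hconcave : StrictConcaveOn ℝ Set.univ LhalfNeg :=
    strictConcaveOn_univ_of_deriv2_neg hcont fun x => by
      rw [deriv2_LhalfNeg]
      exact neg_neg_of_pos <|
        div_pos (mul_pos (Real.exp_pos _) (besselSeries_pos 1 (sq_nonneg _))) (by norm_num)
  exact hconcave.subset (Set.subset_univ _) (convex_Ici 0)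
end

section
/- Define U(ρ) = ρ I_0(ρ/2)² − ρ I_1(ρ/2)² − 2 I_0(ρ/2) I_1(ρ/2). Then U(0) = 0 and U(ρ) > 0 for all ρ > 0. -/
/-- U(ρ) = ρ I_0(ρ/2)² − ρ I_1(ρ/2)² − 2 I_0(ρ/2) I_1(ρ/2). -/
noncomputable def Ufun (ρ : ℝ) : ℝ :=
  ρ * besselI0 (ρ / 2) ^ 2 - ρ * besselI1 (ρ / 2) ^ 2 - 2 * besselI0 (ρ / 2) * besselI1 (ρ / 2)

open Finset
open scoped Nat

noncomputable def besselI (k : ℕ) (x : ℝ) : ℝ :=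
  ∑' m : ℕ, (x / 2) ^ (2 * m + k) / ((m ! : ℝ) * (m + k)!)

lemma besselI_zero : besselI 0 = besselI0 := by
  ext x
  simp only [besselI, besselI0, add_zero, sq]

lemma besselI_one : besselI 1 = besselI1 := rfl

lemma summable_norm_besselI_term (k : ℕ) (x : ℝ) :
    Summable fun m : ℕ => ‖(x / 2) ^ (2 * m + k) / ((m ! : ℝ) * (m + k)!)‖ := by
  refine .of_nonneg_of_le (fun _ => norm_nonneg _) (fun m => ?_)
    ((Real.summable_pow_div_factorial ((x / 2) ^ 2)).mul_left (|x / 2| ^ k))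
  have hfac : (m ! : ℝ) ≤ m ! * (m + k)! :=
    le_mul_of_one_le_right (by positivity) (by exact_mod_cast Nat.factorial_pos (m + k))
  rw [norm_div, norm_mul, Real.norm_natCast, Real.norm_natCast, norm_pow, Real.norm_eq_abs,
    pow_add, pow_mul, ← abs_pow, abs_of_nonneg (sq_nonneg _), mul_comm, mul_div_assoc]
  gcongr

lemma sum_antidiagonal_inv_factorial_mul (a b n : ℕ) :
    ∑ ij ∈ antidiagonal n, 1 / ((ij.1 ! : ℝ) * (ij.1 + a)!) * (1 / ((ij.2 ! : ℝ) * (ij.2 + b)!)) =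
      ((2 * n + a + b).choose n : ℝ) / ((n + a)! * (n + b)!) := by
  rw [show 2 * n + a + b = (n + b) + (n + a) by ring, Nat.add_choose_eq, Nat.cast_sum, sum_div]
  refine sum_congr rfl fun ⟨i, j⟩ hij => ?_
  obtain rfl : n = i + j := (mem_antidiagonal.1 hij).symm
  rw [Nat.cast_mul, Nat.cast_choose ℝ (by omega : i ≤ i + j + b),
    Nat.cast_choose ℝ (by omega : j ≤ i + j + a), show i + j + b - i = j + b by omega,
    show i + j + a - j = i + a by omega]
  field_simp

lemma hasSum_besselI_mul (a b : ℕ) (x : ℝ) :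
    HasSum (fun n : ℕ => ((2 * n + a + b).choose n : ℝ) / ((n + a)! * (n + b)!) *
      (x / 2) ^ (2 * n + a + b)) (besselI a x * besselI b x) := by
  have ha := summable_norm_besselI_term a x
  have hb := summable_norm_besselI_term b x
  rw [besselI, besselI, tsum_mul_tsum_eq_tsum_sum_antidiagonal_of_summable_norm ha hb]
  refine (summable_norm_sum_mul_antidiagonal_of_summable_norm ha hb).of_norm.hasSum.congr_fun
    fun n => ?_
  rw [← sum_antidiagonal_inv_factorial_mul, sum_mul]
  refine sum_congr rfl fun ⟨i, j⟩ hij => ?_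
  obtain rfl : n = i + j := (mem_antidiagonal.1 hij).symm
  rw [show 2 * (i + j) + a + b = (2 * i + a) + (2 * j + b) by ring, pow_add]
  ring

/-- The series of `hasSum_besselI_mul 1 1` shifted by one index; `C(2n, n + 1)` vanishes at
`n = 0` and equals `C(2n, n - 1)` otherwise. -/
lemma hasSum_besselI_one_sq (x : ℝ) :
    HasSum (fun n : ℕ => ((2 * n).choose (n + 1) : ℝ) / (n ! * n !) * (x / 2) ^ (2 * n))
      (besselI 1 x ^ 2) := by
  refine (hasSum_nat_add_iff' 1).1 ?_
  rw [sum_range_one, Nat.choose_eq_zero_of_lt (by omega), Nat.cast_zero, zero_div, zero_mul,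
    sub_zero, sq]
  refine (hasSum_besselI_mul 1 1 x).congr_fun fun n => ?_
  rw [Nat.choose_symm_of_eq_add (by ring : 2 * (n + 1) = n + 1 + 1 + n)]
  ring_nf

lemma Ufun_coeff_eq (n : ℕ) :
    4 * (((2 * n).choose n : ℝ) / (n ! * n !)) - 4 * ((2 * n).choose (n + 1) / (n ! * n !))
      - 2 * ((2 * n + 1).choose n / (n ! * (n + 1)!)) = 2 * n.centralBinom / (n + 1)! ^ 2 := by
  have hshift : ((2 * n).choose (n + 1) : ℝ) * (n + 1) = (2 * n).choose n * n := by
    exact_mod_cast (show 2 * n - n = n by omega) ▸ Nat.choose_succ_right_eq (2 * n) n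
  have hsucc : ((2 * n + 1).choose n : ℝ) * (n + 1) = (2 * n).choose n * (2 * n + 1) := by
    exact_mod_cast (show 2 * n + 1 - n = n + 1 by omega) ▸ (Nat.choose_mul_succ_eq (2 * n) n).symm
  rw [Nat.centralBinom_eq_two_mul_choose, Nat.factorial_succ, Nat.cast_mul]
  field_simp
  push_cast
  linear_combination (-4 * ((n : ℝ) + 1)) * hshift - 2 * hsucc

lemma hasSum_Ufun (s : ℝ) :
    HasSum (fun n : ℕ => 2 * n.centralBinom / (n + 1)! ^ 2 * s ^ (2 * n + 1)) (Ufun (4 * s)) := by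
  have hs : 4 * s / 2 / 2 = s := by ring
  have h00 := hs ▸ hasSum_besselI_mul 0 0 (4 * s / 2)
  have h11 := hs ▸ hasSum_besselI_one_sq (4 * s / 2)
  have h01 := hs ▸ hasSum_besselI_mul 0 1 (4 * s / 2)
  have hU : Ufun (4 * s) = 4 * s * (besselI 0 (4 * s / 2) * besselI 0 (4 * s / 2)) -
      4 * s * besselI 1 (4 * s / 2) ^ 2 - 2 * (besselI 0 (4 * s / 2) * besselI 1 (4 * s / 2)) := by
    rw [besselI_zero, besselI_one, Ufun]
    ring
  rw [hU]
  refine (((h00.mul_left (4 * s)).sub (h11.mul_left (4 * s))).sub (h01.mul_left 2)).congr_fun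
    fun n => ?_
  rw [← Ufun_coeff_eq]
  simp only [add_zero]
  ring

theorem Ufun_pos : Ufun 0 = 0 ∧ ∀ ρ : ℝ, 0 < ρ → 0 < Ufun ρ := by
  refine ⟨?_, fun ρ hρ => ?_⟩
  · simpa using (hasSum_Ufun 0).unique (by simp)
  · have hU := hasSum_Ufun (ρ / 4)
    rw [mul_div_cancel₀ ρ four_ne_zero] at hU
    have hterm (n : ℕ) : 0 < 2 * n.centralBinom / (n + 1)! ^ 2 * (ρ / 4) ^ (2 * n + 1) := by
      have := n.centralBinom_pos
      positivity
    exact hasSum_lt (f := 0) (i := 0) (fun n => (hterm n).le) (hterm 0) hasSum_zero hU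
end

section
/- Under the setup z_i = A a t_{1i} + A b t_{2i} + A h_2 n_i + η_i with t_{1i}, t_{2i} M-PSK symbols of powers P_1 = αP_2, P_2, and n_i, η_i independent zero-mean complex Gaussian noises with variance σ² each, independent across i and of the symbols, the mean squared error of â_g = (1/(N A P_1)) ∑ t_{1i}* z_i is E|â_g − a|² = |b|²/(Nα) + |h_2|²σ²/(NαP_2) + σ²/(N A² α P_2). -/
/-!
Substituting the model, the signal term of `â_g` reproduces `a` exactly (`conj t₁ᵢ · t₁ᵢ = P₁`),
so the error is a linear combination `∑ⱼ cⱼ Uⱼ` of the symbols `t₂ᵢ` and the noises `nᵢ`, `ηᵢ`.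
These are centred (for `t₂ᵢ` because the `M` PSK phasors are a rotated set of `M`-th roots of
unity, which sum to zero) and pairwise independent, hence orthogonal in `L²`; so the mean squared
error is `∑ⱼ ‖cⱼ‖² E‖Uⱼ‖²`, with `‖cⱼ‖²` computed from `|t₁ᵢ|² = P₁`.
-/

open MeasureTheory ProbabilityTheory Complex
open scoped ENNReal ComplexConjugate

section Orthogonality

variable {Ω ι : Type*} [MeasurableSpace Ω] {μ : Measure Ω}

lemma integral_mul_conj_eq_zero_of_indepFun {U V : Ω → ℂ} (h : U ⟂ᵢ[μ] V)
    (hU : AEStronglyMeasurable U μ) (hV : AEStronglyMeasurable V μ) (hU0 : ∫ ω, U ω ∂μ = 0) :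
    ∫ ω, U ω * conj (V ω) ∂μ = 0 :=
  ((h.comp measurable_id continuous_conj.measurable).integral_fun_mul_eq_mul_integral hU
    (continuous_conj.comp_aestronglyMeasurable hV)).trans (by simp [hU0])

lemma integral_norm_sq_sum_of_orthogonal [Fintype ι] (c : ι → ℂ) {U : ι → Ω → ℂ}
    (hint : ∀ j k, Integrable (fun ω => U j ω * conj (U k ω)) μ)
    (horth : Pairwise fun j k => ∫ ω, U j ω * conj (U k ω) ∂μ = 0) :
    ∫ ω, ‖∑ j, c j * U j ω‖ ^ 2 ∂μ = ∑ j, ‖c j‖ ^ 2 * ∫ ω, ‖U j ω‖ ^ 2 ∂μ := by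
  have hexpand : ∀ ω, ((‖∑ j, c j * U j ω‖ ^ 2 : ℝ) : ℂ)
      = ∑ j, ∑ k, c j * conj (c k) * (U j ω * conj (U k ω)) := by
    intro ω
    rw [ofReal_pow, ← mul_conj', map_sum, Finset.sum_mul_sum]
    exact Finset.sum_congr rfl fun j _ => Finset.sum_congr rfl fun k _ => by
      simp only [map_mul]; ring
  have hdiag : ∀ j, ∫ ω, U j ω * conj (U j ω) ∂μ = ((∫ ω, ‖U j ω‖ ^ 2 ∂μ : ℝ) : ℂ) := by
    intro j
    simp only [mul_conj', ← integral_complex_ofReal, ofReal_pow]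
  apply Complex.ofReal_injective
  calc ((∫ ω, ‖∑ j, c j * U j ω‖ ^ 2 ∂μ : ℝ) : ℂ)
      = ∑ j, ∑ k, c j * conj (c k) * ∫ ω, U j ω * conj (U k ω) ∂μ := by
        rw [← integral_complex_ofReal]
        simp_rw [hexpand]
        rw [integral_finsetSum _ fun j _ =>
          integrable_finsetSum _ fun k _ => (hint j k).const_mul _]
        simp_rw [integral_finsetSum _ fun k _ => (hint _ k).const_mul _, integral_const_mul]
    _ = ∑ j, c j * conj (c j) * ∫ ω, U j ω * conj (U j ω) ∂μ := by
        refine Finset.sum_congr rfl fun j _ => Finset.sum_eq_single j (fun k _ hkj => ?_) (by simp)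
        rw [horth hkj.symm, mul_zero]
    _ = _ := by
        push_cast
        exact Finset.sum_congr rfl fun j _ => by rw [hdiag, mul_conj']

lemma integral_norm_sq_sum_of_indepFun [Fintype ι] (c : ι → ℂ) {U : ι → Ω → ℂ}
    (hindep : Pairwise fun j k => U j ⟂ᵢ[μ] U k)
    (hint : ∀ j, Integrable (U j) μ) (hmean : ∀ j, ∫ ω, U j ω ∂μ = 0)
    (hsq : ∀ j, Integrable (fun ω => ‖U j ω‖ ^ 2) μ) :
    ∫ ω, ‖∑ j, c j * U j ω‖ ^ 2 ∂μ = ∑ j, ‖c j‖ ^ 2 * ∫ ω, ‖U j ω‖ ^ 2 ∂μ := by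
  refine integral_norm_sq_sum_of_orthogonal c (fun j k => ?_) fun j k hjk =>
    integral_mul_conj_eq_zero_of_indepFun (hindep hjk) (hint j).1 (hint k).1 (hmean j)
  obtain rfl | hjk := eq_or_ne j k
  · simp only [mul_conj']
    exact_mod_cast (hsq j).ofReal
  · exact ((hindep hjk).comp measurable_id continuous_conj.measurable).integrable_mul (hint j)
      (conjCLE.toContinuousLinearMap.integrable_comp (hint k))

end Orthogonality

noncomputable def pskPhaseLaw (M : ℕ) : Measure ℝ :=
  ((M : ℝ≥0∞))⁻¹ • ∑ ℓ ∈ Finset.range M, Measure.dirac ((2 * (ℓ : ℝ) + 1) * Real.pi / M)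

lemma sum_range_exp_pskPhase_eq_zero {M : ℕ} (hM : 2 ≤ M) :
    ∑ ℓ ∈ Finset.range M, exp (I * (((2 * ℓ + 1) * Real.pi / M : ℝ) : ℂ)) = 0 := by
  have hM0 : (M : ℂ) ≠ 0 := Nat.cast_ne_zero.mpr (by omega)
  have hterm : ∀ ℓ : ℕ, exp (I * (((2 * ℓ + 1) * Real.pi / M : ℝ) : ℂ))
      = exp (Real.pi * I / M) * exp (2 * Real.pi * I / M) ^ ℓ := by
    intro ℓ
    rw [← exp_nat_mul, ← exp_add]
    congr 1
    push_cast
    field_simp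
    ring
  -- a rotation of the sum of the `M`-th roots of unity
  simp_rw [hterm, ← Finset.mul_sum, (isPrimitiveRoot_exp M (by omega)).geom_sum_eq_zero hM,
    mul_zero]

lemma integral_exp_I_mul_pskPhaseLaw {M : ℕ} (hM : 2 ≤ M) :
    ∫ x, exp (I * x) ∂pskPhaseLaw M = 0 := by
  have hint (x : ℝ) : Integrable (fun x : ℝ => exp (I * x)) (Measure.dirac x) :=
    Integrable.of_bound (by fun_prop) 1 (.of_forall fun y => (norm_exp_I_mul_ofReal y).le)
  rw [pskPhaseLaw, integral_smul_measure, integral_finsetSum_measure fun ℓ _ => hint _]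
  simp_rw [integral_dirac, sum_range_exp_pskPhase_eq_zero hM, smul_zero]

lemma norm_sqrt_mul_exp_I_mul (P x : ℝ) :
    ‖(Real.sqrt P : ℂ) * exp (I * x)‖ = Real.sqrt P := by
  rw [norm_mul, norm_exp_I_mul_ofReal, mul_one, norm_real, Real.norm_of_nonneg (Real.sqrt_nonneg P)]

lemma pskSymbol_moments {Ω : Type*} [MeasurableSpace Ω] {μ : Measure Ω} [IsProbabilityMeasure μ]
    {M : ℕ} (hM : 2 ≤ M) {φ : Ω → ℝ} (hφ : Measurable φ) (hdist : μ.map φ = pskPhaseLaw M)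
    {P : ℝ} (hP : 0 ≤ P) :
    Integrable (fun ω => (Real.sqrt P : ℂ) * exp (I * φ ω)) μ
      ∧ ∫ ω, (Real.sqrt P : ℂ) * exp (I * φ ω) ∂μ = 0
      ∧ Integrable (fun ω => ‖(Real.sqrt P : ℂ) * exp (I * φ ω)‖ ^ 2) μ := by
  have hsq : (fun ω => ‖(Real.sqrt P : ℂ) * exp (I * φ ω)‖ ^ 2) = fun _ => P := by
    simp_rw [norm_sqrt_mul_exp_I_mul P, Real.sq_sqrt hP]
  refine ⟨.of_bound (by fun_prop) _ (.of_forall fun ω => (norm_sqrt_mul_exp_I_mul P _).le),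
    ?_, hsq ▸ integrable_const P⟩
  rw [integral_const_mul, ← integral_map (f := fun x : ℝ => exp (I * x)) hφ.aemeasurable
    (by fun_prop), hdist, integral_exp_I_mul_pskPhaseLaw hM, mul_zero]

lemma matchedFilter_sub_eq {N : ℕ} {A P a : ℂ} (hNAP : (N : ℂ) * A * P ≠ 0) {t w : Fin N → ℂ}
    (ht : ∀ i, conj (t i) * t i = P) :
    1 / (N * A * P) * ∑ i, conj (t i) * (A * a * t i + w i) - a
      = ∑ i, conj (t i) / (N * A * P) * w i := by
  have hsignal : ∑ i, conj (t i) * (A * a * t i) = N * A * P * a := by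
    simp only [mul_left_comm _ (A * a), ht, Finset.sum_const, Finset.card_univ, Fintype.card_fin,
      nsmul_eq_mul]
    ring
  rw [Finset.sum_congr rfl fun i _ => mul_add _ _ _, Finset.sum_add_distrib, hsignal, mul_add,
    one_div, inv_mul_cancel_left₀ hNAP, add_sub_cancel_left, Finset.mul_sum]
  exact Finset.sum_congr rfl fun i _ => by ring

lemma matchedFilter_sub_eq_sum_sumElim {N : ℕ} {A P a : ℂ} (hNAP : (N : ℂ) * A * P ≠ 0)
    {t : Fin N → ℂ} (ht : ∀ i, conj (t i) * t i = P) (β γ : ℂ) (u v w : Fin N → ℂ) :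
    1 / (N * A * P) * ∑ i, conj (t i) * (A * a * t i + β * u i + γ * v i + w i) - a
      = ∑ j, Sum.elim (fun i => conj (t i) / (N * A * P) * β)
          (Sum.elim (fun i => conj (t i) / (N * A * P) * γ) fun i => conj (t i) / (N * A * P)) j
        * Sum.elim u (Sum.elim v w) j := by
  simp_rw [add_assoc]
  rw [matchedFilter_sub_eq (w := fun i => β * u i + (γ * v i + w i)) hNAP ht]
  simp only [Fintype.sum_sum_type, Sum.elim_inl, Sum.elim_inr, mul_add, Finset.sum_add_distrib,
    mul_assoc]

theorem gml_mse_general {Ω : Type*} [MeasurableSpace Ω] (μ : Measure Ω) [IsProbabilityMeasure μ]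
    (N M : ℕ) (hN : 0 < N) (hM : 2 ≤ M)
    (A α P1 P2 σ : ℝ) (hA : 0 < A) (hα : 0 < α) (hP2 : 0 < P2)
    (hP1 : P1 = α * P2)
    (a b h2 : ℂ) (φ1 : Fin N → ℝ) (φ2 : Fin N → Ω → ℝ) (n η : Fin N → Ω → ℂ)
    (hφ2meas : ∀ i, Measurable (φ2 i))
    -- each φ2 i is uniform on the M-PSK phase set {(2ℓ−1)π/M : ℓ = 1,…,M}
    (hφ2dist : ∀ i, Measure.map (φ2 i) μ =
      ((M : ℝ≥0∞))⁻¹ • ∑ ℓ ∈ Finset.range M,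
        Measure.dirac ((2 * (ℓ : ℝ) + 1) * Real.pi / M))
    -- the phases and the two noise families are mutually independent across all indices
    (X : (Fin N ⊕ Fin N ⊕ Fin N) → Ω → ℂ)
    (hX : X = Sum.elim (fun i ω => ((φ2 i ω : ℝ) : ℂ)) (Sum.elim n η))
    (hindep : iIndepFun X μ)
    -- zero-mean noises with variance σ² each
    (hnInt : ∀ i, Integrable (n i) μ) (hnMean : ∀ i, ∫ ω, n i ω ∂μ = 0)
    (hnVar : ∀ i, ∫ ω, ‖n i ω‖ ^ 2 ∂μ = σ ^ 2)
    (hηInt : ∀ i, Integrable (η i) μ) (hηMean : ∀ i, ∫ ω, η i ω ∂μ = 0)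
    (hηVar : ∀ i, ∫ ω, ‖η i ω‖ ^ 2 ∂μ = σ ^ 2)
    (hnSq : ∀ i, Integrable (fun ω => ‖n i ω‖ ^ 2) μ)
    (hηSq : ∀ i, Integrable (fun ω => ‖η i ω‖ ^ 2) μ)
    (t1 : Fin N → ℂ)
    (ht1 : ∀ i, t1 i = (Real.sqrt P1 : ℂ) * Complex.exp (Complex.I * ((φ1 i : ℝ) : ℂ)))
    (t2 : Fin N → Ω → ℂ)
    (ht2 : ∀ i ω, t2 i ω = (Real.sqrt P2 : ℂ) * Complex.exp (Complex.I * ((φ2 i ω : ℝ) : ℂ)))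
    (z : Fin N → Ω → ℂ)
    (hz : ∀ i ω, z i ω = (A : ℂ) * a * t1 i + (A : ℂ) * b * t2 i ω
        + (A : ℂ) * h2 * n i ω + η i ω) :
    ∫ ω, ‖((1 / ((N : ℂ) * (A : ℂ) * (P1 : ℂ))) *
          ∑ i, (starRingEnd ℂ) (t1 i) * z i ω) - a‖ ^ 2 ∂μ
      = ‖b‖ ^ 2 / (N * α) + ‖h2‖ ^ 2 * σ ^ 2 / (N * α * P2)
        + σ ^ 2 / (N * A ^ 2 * α * P2) := by
  have hP1pos : 0 < P1 := hP1 ▸ by positivity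
  have hNAP : (N : ℂ) * A * P1 ≠ 0 := by exact_mod_cast (by positivity : (N : ℝ) * A * P1 ≠ 0)
  have ht1sq : ∀ i, conj (t1 i) * t1 i = P1 := fun i => by
    rw [conj_mul', ht1, norm_sqrt_mul_exp_I_mul, ← ofReal_pow, Real.sq_sqrt hP1pos.le]
  let U : Fin N ⊕ Fin N ⊕ Fin N → Ω → ℂ := fun j ω => Sum.elim (t2 · ω) (Sum.elim (n · ω) (η · ω)) j
  have hindepU : Pairwise fun j k => U j ⟂ᵢ[μ] U k := by
    let g : Fin N ⊕ Fin N ⊕ Fin N → ℂ → ℂ :=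
      Sum.elim (fun _ x => (Real.sqrt P2 : ℂ) * exp (I * x)) fun _ => id
    have hUX : U = fun j => g j ∘ X j := by
      funext j ω
      rcases j with i | i | i <;> simp [U, g, hX, ht2]
    rw [hUX]
    exact fun j k hjk => (hindep.comp g fun j => by
      rcases j with j | j <;> simp only [g, Sum.elim_inl, Sum.elim_inr] <;> fun_prop).indepFun hjk
  have hmom : ∀ j, Integrable (U j) μ ∧ ∫ ω, U j ω ∂μ = 0
      ∧ Integrable (fun ω => ‖U j ω‖ ^ 2) μ := by
    rintro (i | i | i)
    · simpa only [U, Sum.elim_inl, funext (ht2 i)] using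
        pskSymbol_moments hM (hφ2meas i) (hφ2dist i) hP2.le
    · exact ⟨hnInt i, hnMean i, hnSq i⟩
    · exact ⟨hηInt i, hηMean i, hηSq i⟩
  simp_rw [hz, matchedFilter_sub_eq_sum_sumElim hNAP ht1sq]
  refine (integral_norm_sq_sum_of_indepFun _ hindepU (fun j => (hmom j).1) (fun j => (hmom j).2.1)
    (fun j => (hmom j).2.2)).trans ?_
  simp only [U, Fintype.sum_sum_type, Sum.elim_inl, Sum.elim_inr, ht1, ht2, map_mul, conj_ofReal,
    Complex.norm_mul, Complex.norm_div, norm_real, Real.norm_eq_abs, RCLike.norm_conj,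
    norm_exp_I_mul_ofReal, mul_one, RCLike.norm_natCast, abs_of_pos hA, abs_of_pos hP1pos, mul_pow,
    div_pow, sq_abs, Real.sq_sqrt hP1pos.le, Real.sq_sqrt hP2.le, integral_const, probReal_univ,
    smul_eq_mul, one_mul, hnVar, hηVar, Finset.sum_const, Finset.card_univ, Fintype.card_fin,
    nsmul_eq_mul]
  rw [hP1]
  field_simp
  ring

theorem gml_mse {Ω : Type*} [MeasurableSpace Ω] (μ : Measure Ω) [IsProbabilityMeasure μ]
    (N M : ℕ) (hN : 0 < N) (hM : 2 ≤ M)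
    (A α P1 P2 σ : ℝ) (hA : 0 < A) (hα : 0 < α) (hP2 : 0 < P2) (hσ : 0 < σ)
    (hP1 : P1 = α * P2)
    (a b h2 : ℂ) (φ1 : Fin N → ℝ) (φ2 : Fin N → Ω → ℝ) (n η : Fin N → Ω → ℂ)
    (hφ2meas : ∀ i, Measurable (φ2 i))
    -- each φ2 i is uniform on the M-PSK phase set {(2ℓ−1)π/M : ℓ = 1,…,M}
    (hφ2dist : ∀ i, Measure.map (φ2 i) μ =
      ((M : ℝ≥0∞))⁻¹ • ∑ ℓ ∈ Finset.range M,
        Measure.dirac ((2 * (ℓ : ℝ) + 1) * Real.pi / M))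
    -- the phases and the two noise families are mutually independent across all indices
    (X : (Fin N ⊕ Fin N ⊕ Fin N) → Ω → ℂ)
    (hX : X = Sum.elim (fun i ω => ((φ2 i ω : ℝ) : ℂ)) (Sum.elim n η))
    (hindep : iIndepFun X μ)
    -- zero-mean noises with variance σ² each
    (hnInt : ∀ i, Integrable (n i) μ) (hnMean : ∀ i, ∫ ω, n i ω ∂μ = 0)
    (hnVar : ∀ i, ∫ ω, ‖n i ω‖ ^ 2 ∂μ = σ ^ 2)
    (hηInt : ∀ i, Integrable (η i) μ) (hηMean : ∀ i, ∫ ω, η i ω ∂μ = 0)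
    (hηVar : ∀ i, ∫ ω, ‖η i ω‖ ^ 2 ∂μ = σ ^ 2)
    (hnSq : ∀ i, Integrable (fun ω => ‖n i ω‖ ^ 2) μ)
    (hηSq : ∀ i, Integrable (fun ω => ‖η i ω‖ ^ 2) μ)
    (t1 : Fin N → ℂ)
    (ht1 : ∀ i, t1 i = (Real.sqrt P1 : ℂ) * Complex.exp (Complex.I * ((φ1 i : ℝ) : ℂ)))
    (t2 : Fin N → Ω → ℂ)
    (ht2 : ∀ i ω, t2 i ω = (Real.sqrt P2 : ℂ) * Complex.exp (Complex.I * ((φ2 i ω : ℝ) : ℂ)))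
    (z : Fin N → Ω → ℂ)
    (hz : ∀ i ω, z i ω = (A : ℂ) * a * t1 i + (A : ℂ) * b * t2 i ω
        + (A : ℂ) * h2 * n i ω + η i ω) :
    ∫ ω, ‖((1 / ((N : ℂ) * (A : ℂ) * (P1 : ℂ))) *
          ∑ i, (starRingEnd ℂ) (t1 i) * z i ω) - a‖ ^ 2 ∂μ
      = ‖b‖ ^ 2 / (N * α) + ‖h2‖ ^ 2 * σ ^ 2 / (N * α * P2)
        + σ ^ 2 / (N * A ^ 2 * α * P2) :=
  gml_mse_general μ N M hN hM A α P1 P2 σ hA hα hP2 hP1 a b h2 φ1 φ2 n η hφ2meas hφ2dist X hX hindep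
    hnInt hnMean hnVar hηInt hηMean hηVar hnSq hηSq t1 ht1 t2 ht2 z hz
end
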